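/- arXiv:2002.01506 — 5 statements merged into one kernel-verified Lean document; each statement's English description precedes it below -/
import Mathlib

section
/- Let X be the positive semidefinite solution of the Lyapunov equation A X + X A* + C C* = 0 and let X̃ be a Hermitian approximation with X̃₊ its positive semidefinite part (keeping only nonnegative eigenvalues). Set R = A X̃ + X̃ A* + C C* and R₊ = A X̃₊ + X̃₊ A* + C C*. Then ‖R₊‖_F ≤ ‖R‖_F + 2‖A‖₂ ‖X − X̃‖_F. -/
/-!
Write `L D = A D + D Aᴴ`. Then `R₊ = R + L (X̃₊ - X̃)` and `‖L D‖_F ≤ 2 ‖A‖₂ ‖D‖_F`, so it suffices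
that `‖X̃₊ - X̃‖_F ≤ ‖X - X̃‖_F`. Both sides are unitarily invariant; in the eigenbasis of `X̃` the
left side only sees the negative eigenvalues `λᵢ`, while `X` becomes a PSD matrix `Y` with
`Re Yᵢᵢ ≥ 0`, so already the diagonal of `Y - diag λ` has entries of modulus `≥ max (-λᵢ) 0`.
-/

open Matrix
open scoped ComplexOrder

noncomputable def frobNorm {m n : Type*} [Fintype m] [Fintype n] (M : Matrix m n ℂ) : ℝ :=
  Real.sqrt (∑ i, ∑ j, ‖M i j‖ ^ 2)

noncomputable def specNorm {m n : Type*} [Fintype m] [Fintype n] [DecidableEq n]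
    (M : Matrix m n ℂ) : ℝ :=
  ‖LinearMap.toContinuousLinearMap (Matrix.toEuclideanLin M)‖

lemma transpose_mul_apply_eq_mulVec {α l m n : Type*} [NonUnitalNonAssocSemiring α] [Fintype m]
    (A : Matrix l m α) (M : Matrix m n α) (j : n) : (A * M)ᵀ j = A *ᵥ Mᵀ j :=
  rfl

section FrobeniusNorm

variable {l m n : Type*} [Fintype l] [Fintype m] [Fintype n]

lemma frobNorm_nonneg (M : Matrix m n ℂ) : 0 ≤ frobNorm M :=
  Real.sqrt_nonneg _

section

attribute [local instance] Matrix.frobeniusNormedAddCommGroup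

lemma frobNorm_eq_norm (M : Matrix m n ℂ) : frobNorm M = ‖M‖ := by
  rw [Matrix.frobenius_norm_def, frobNorm, Real.sqrt_eq_rpow]
  norm_cast

lemma frobNorm_add_le (M N : Matrix m n ℂ) : frobNorm (M + N) ≤ frobNorm M + frobNorm N := by
  simp only [frobNorm_eq_norm]
  exact norm_add_le M N

lemma frobNorm_conjTranspose (M : Matrix m n ℂ) : frobNorm Mᴴ = frobNorm M := by
  simp only [frobNorm_eq_norm, frobenius_norm_conjTranspose]

end

lemma frobNorm_sq_eq_sum_col (M : Matrix m n ℂ) :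
    frobNorm M ^ 2 = ∑ j, ‖WithLp.toLp 2 (Mᵀ j)‖ ^ 2 := by
  rw [frobNorm, Real.sq_sqrt (by positivity), Finset.sum_comm]
  simp [EuclideanSpace.norm_sq_eq]

lemma frobNorm_le_of_norm_col_le {M : Matrix m n ℂ} {N : Matrix l n ℂ} {c : ℝ} (hc : 0 ≤ c)
    (h : ∀ j, ‖WithLp.toLp 2 (Mᵀ j)‖ ≤ c * ‖WithLp.toLp 2 (Nᵀ j)‖) :
    frobNorm M ≤ c * frobNorm N := by
  rw [← pow_le_pow_iff_left₀ (frobNorm_nonneg M) (mul_nonneg hc (frobNorm_nonneg N)) two_ne_zero,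
    mul_pow, frobNorm_sq_eq_sum_col, frobNorm_sq_eq_sum_col, Finset.mul_sum]
  gcongr with j
  rw [← mul_pow]
  exact pow_le_pow_left₀ (norm_nonneg _) (h j) 2

lemma frobNorm_diagonal_le [DecidableEq m] {d : m → ℂ} {M : Matrix m m ℂ}
    (h : ∀ i, ‖d i‖ ≤ ‖M i i‖) : frobNorm (diagonal d) ≤ frobNorm M := by
  refine Real.sqrt_le_sqrt ?_
  calc ∑ i, ∑ j, ‖diagonal d i j‖ ^ 2 = ∑ i, ‖d i‖ ^ 2 := by
        simp [diagonal_apply, apply_ite]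
    _ ≤ ∑ i, ‖M i i‖ ^ 2 := by gcongr with i; exact h i
    _ ≤ ∑ i, ∑ j, ‖M i j‖ ^ 2 := by
        gcongr with i
        exact Finset.single_le_sum (f := fun j => ‖M i j‖ ^ 2) (fun _ _ => by positivity)
          (Finset.mem_univ i)

end FrobeniusNorm

section SpectralNorm

variable {l m n : Type*} [Fintype l] [Fintype m] [Fintype n] [DecidableEq m]

lemma specNorm_nonneg (A : Matrix l m ℂ) : 0 ≤ specNorm A :=
  norm_nonneg _

lemma norm_toLp_mulVec_le (A : Matrix l m ℂ) (v : m → ℂ) :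
    ‖WithLp.toLp 2 (A *ᵥ v)‖ ≤ specNorm A * ‖WithLp.toLp 2 v‖ :=
  (LinearMap.toContinuousLinearMap (toEuclideanLin A)).le_opNorm (WithLp.toLp 2 v)

lemma frobNorm_mul_le (A : Matrix l m ℂ) (M : Matrix m n ℂ) :
    frobNorm (A * M) ≤ specNorm A * frobNorm M :=
  frobNorm_le_of_norm_col_le (specNorm_nonneg A) fun j => by
    rw [transpose_mul_apply_eq_mulVec]
    exact norm_toLp_mulVec_le A (Mᵀ j)

lemma frobNorm_mul_conjTranspose_le (A : Matrix l m ℂ) (M : Matrix n m ℂ) :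
    frobNorm (M * Aᴴ) ≤ specNorm A * frobNorm M := by
  rw [← frobNorm_conjTranspose, conjTranspose_mul, conjTranspose_conjTranspose,
    ← frobNorm_conjTranspose M]
  exact frobNorm_mul_le A Mᴴ

lemma frobNorm_lyapunov_le (A D : Matrix m m ℂ) :
    frobNorm (A * D + D * Aᴴ) ≤ 2 * specNorm A * frobNorm D := by
  linarith [frobNorm_add_le (A * D) (D * Aᴴ), frobNorm_mul_le A D,
    frobNorm_mul_conjTranspose_le A D]

end SpectralNorm

section Unitary

variable {m n : Type*} [Fintype m] [Fintype n] [DecidableEq m]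

lemma norm_toLp_mulVec_of_mem_unitaryGroup {U : Matrix m m ℂ} (hU : U ∈ unitaryGroup m ℂ)
    (v : m → ℂ) : ‖WithLp.toLp 2 (U *ᵥ v)‖ = ‖WithLp.toLp 2 v‖ := by
  rw [← toEuclideanCLM_toLp]
  exact ContinuousLinearMap.norm_map_of_mem_unitary (Unitary.map_mem _ hU) _

lemma frobNorm_unitary_mul {U : Matrix m m ℂ} (hU : U ∈ unitaryGroup m ℂ) (M : Matrix m n ℂ) :
    frobNorm (U * M) = frobNorm M := by
  rw [← sq_eq_sq₀ (frobNorm_nonneg _) (frobNorm_nonneg _), frobNorm_sq_eq_sum_col,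
    frobNorm_sq_eq_sum_col]
  simp only [transpose_mul_apply_eq_mulVec, norm_toLp_mulVec_of_mem_unitaryGroup hU]

lemma frobNorm_unitary_conj {U : Matrix m m ℂ} (hU : U ∈ unitaryGroup m ℂ) (M : Matrix m m ℂ) :
    frobNorm (U * M * Uᴴ) = frobNorm M := by
  rw [mul_assoc, frobNorm_unitary_mul hU, ← frobNorm_conjTranspose, conjTranspose_mul,
    conjTranspose_conjTranspose, frobNorm_unitary_mul hU, frobNorm_conjTranspose]

end Unitary

lemma norm_ofReal_max_zero_sub_le {z : ℂ} (hz : 0 ≤ z) (t : ℝ) :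
    ‖((max t 0 : ℝ) : ℂ) - t‖ ≤ ‖z - t‖ := by
  have hre : 0 ≤ z.re := (Complex.nonneg_iff.mp hz).1
  calc ‖((max t 0 : ℝ) : ℂ) - t‖ = |max t 0 - t| := by
        rw [← Complex.ofReal_sub, Complex.norm_real, Real.norm_eq_abs]
    _ ≤ |z.re - t| := by
        rcases le_total t 0 with h | h
        · rw [max_eq_right h, abs_of_nonneg (by linarith), abs_of_nonneg (by linarith)]
          linarith
        · simp [max_eq_left h]
    _ ≤ ‖z - t‖ := by simpa using Complex.abs_re_le_norm (z - t)

lemma frobNorm_diagonal_posPart_sub_le {m : Type*} [Fintype m] [DecidableEq m]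
    {Y : Matrix m m ℂ} (hY : Y.PosSemidef) (lam : m → ℝ) :
    frobNorm (diagonal (fun i => ((max (lam i) 0 : ℝ) : ℂ)) - diagonal (fun i => (lam i : ℂ)))
      ≤ frobNorm (Y - diagonal fun i => (lam i : ℂ)) := by
  rw [diagonal_sub]
  exact frobNorm_diagonal_le fun i => by
    simpa using norm_ofReal_max_zero_sub_le hY.diag_nonneg (lam i)

lemma frobNorm_psdPart_sub_le {m : Type*} [Fintype m] [DecidableEq m] {X U : Matrix m m ℂ}
    (hX : X.PosSemidef) (hU : U ∈ unitaryGroup m ℂ) (lam : m → ℝ) :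
    frobNorm (U * diagonal (fun i => ((max (lam i) 0 : ℝ) : ℂ)) * Uᴴ
        - U * diagonal (fun i => (lam i : ℂ)) * Uᴴ)
      ≤ frobNorm (X - U * diagonal (fun i => (lam i : ℂ)) * Uᴴ) := by
  have hUU : U * Uᴴ = 1 := mem_unitaryGroup_iff.mp hU
  have hX_conj : U * (Uᴴ * X * U) * Uᴴ = X := by
    simp only [← mul_assoc, hUU, one_mul]
    rw [mul_assoc, hUU, mul_one]
  rw [← sub_mul, ← mul_sub, frobNorm_unitary_conj hU]
  nth_rw 1 [← hX_conj]
  rw [← sub_mul, ← mul_sub, frobNorm_unitary_conj hU]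
  exact frobNorm_diagonal_posPart_sub_le (hX.conjTranspose_mul_mul_same U) lam

theorem psd_part_residual_bound_general {n s : ℕ}
    (A : Matrix (Fin n) (Fin n) ℂ) (C : Matrix (Fin n) (Fin s) ℂ)
    (X Xt Xp : Matrix (Fin n) (Fin n) ℂ)
    (hX : X.PosSemidef)
    (U : Matrix (Fin n) (Fin n) ℂ) (hU : U ∈ Matrix.unitaryGroup (Fin n) ℂ)
    (lam : Fin n → ℝ)
    (hdec : Xt = U * Matrix.diagonal (fun i => (lam i : ℂ)) * Uᴴ)
    (hXp : Xp = U * Matrix.diagonal (fun i => ((max (lam i) 0 : ℝ) : ℂ)) * Uᴴ) :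
    frobNorm (A * Xp + Xp * Aᴴ + C * Cᴴ)
      ≤ frobNorm (A * Xt + Xt * Aᴴ + C * Cᴴ) + 2 * specNorm A * frobNorm (X - Xt) := by
  have hD : frobNorm (Xp - Xt) ≤ frobNorm (X - Xt) := by
    rw [hXp, hdec]
    exact frobNorm_psdPart_sub_le hX hU lam
  have hsplit : A * Xp + Xp * Aᴴ + C * Cᴴ
      = (A * Xt + Xt * Aᴴ + C * Cᴴ) + (A * (Xp - Xt) + (Xp - Xt) * Aᴴ) := by
    noncomm_ring
  calc frobNorm (A * Xp + Xp * Aᴴ + C * Cᴴ)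
      ≤ frobNorm (A * Xt + Xt * Aᴴ + C * Cᴴ) + frobNorm (A * (Xp - Xt) + (Xp - Xt) * Aᴴ) :=
        hsplit ▸ frobNorm_add_le _ _
    _ ≤ frobNorm (A * Xt + Xt * Aᴴ + C * Cᴴ) + 2 * specNorm A * frobNorm (Xp - Xt) := by
        gcongr
        exact frobNorm_lyapunov_le A _
    _ ≤ frobNorm (A * Xt + Xt * Aᴴ + C * Cᴴ) + 2 * specNorm A * frobNorm (X - Xt) := by
        have := specNorm_nonneg A
        gcongr

/-- If `X` is the PSD solution of the Lyapunov equation `A X + X A* + C C* = 0`, `X̃` is a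
Hermitian approximation and `X̃₊` its PSD part, then the residual of `X̃₊` satisfies
`‖R₊‖_F ≤ ‖R‖_F + 2 ‖A‖₂ ‖X − X̃‖_F`. -/
theorem psd_part_residual_bound {n s : ℕ}
    (A : Matrix (Fin n) (Fin n) ℂ) (C : Matrix (Fin n) (Fin s) ℂ)
    (X Xt Xp : Matrix (Fin n) (Fin n) ℂ)
    (hX : X.PosSemidef) (hLyap : A * X + X * Aᴴ + C * Cᴴ = 0)
    (hXt : Xt.IsHermitian)
    (U : Matrix (Fin n) (Fin n) ℂ) (hU : U ∈ Matrix.unitaryGroup (Fin n) ℂ)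
    (lam : Fin n → ℝ)
    (hdec : Xt = U * Matrix.diagonal (fun i => (lam i : ℂ)) * Uᴴ)
    (hXp : Xp = U * Matrix.diagonal (fun i => ((max (lam i) 0 : ℝ) : ℂ)) * Uᴴ) :
    frobNorm (A * Xp + Xp * Aᴴ + C * Cᴴ)
      ≤ frobNorm (A * Xt + Xt * Aᴴ + C * Cᴴ) + 2 * specNorm A * frobNorm (X - Xt) :=
  psd_part_residual_bound_general A C X Xt Xp hX U hU lam hdec hXp
end

section
/- Under the same orthogonality assumptions, the spectral norm of the residual R = U_{m+1} H_{m+1,m} E_m* Y V_m* + U_m Y E_m G_{m+1,m}* V_{m+1}* satisfies ‖R‖₂ = max{‖H_{m+1,m} E_m* Y‖₂, ‖Y E_m G_{m+1,m}*‖₂}. -/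
/-!
Stack the bases as `U = [U_{m+1} U_m]` and `V = [V_m V_{m+1}]`; by the orthogonality assumptions
both have orthonormal columns, and `R = U · diag(H_{m+1,m} E_m* Y, Y E_m G_{m+1,m}*) · V*`.
Multiplication by a matrix with orthonormal columns on the left, or by the adjoint of one on the
right, preserves the spectral norm, and a block-diagonal matrix has as spectral norm the maximum
of the spectral norms of its blocks.
-/

open Matrix
open scoped ComplexOrder

/-- The block matrix `E_m = e_m ⊗ I_s`. -/
noncomputable def Em (m s : ℕ) : Matrix (Fin m × Fin s) (Fin s) ℂ :=
  fun p j => if p.1.val = m - 1 ∧ p.2 = j then 1 else 0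

open WithLp
open scoped Matrix.Norms.L2Operator

lemma EuclideanSpace.norm_sq_toLp_sumElim {𝕜 ι κ : Type*} [RCLike 𝕜] [Fintype ι] [Fintype κ]
    (u : ι → 𝕜) (v : κ → 𝕜) :
    ‖(toLp 2 (Sum.elim u v) : EuclideanSpace 𝕜 (ι ⊕ κ))‖ ^ 2 =
      ‖(toLp 2 u : EuclideanSpace 𝕜 ι)‖ ^ 2 + ‖(toLp 2 v : EuclideanSpace 𝕜 κ)‖ ^ 2 := by
  simp only [EuclideanSpace.norm_sq_eq, Fintype.sum_sum_type, Sum.elim_inl, Sum.elim_inr]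

namespace Matrix

variable {𝕜 : Type*} [RCLike 𝕜] {α β γ δ : Type*}

lemma specNorm_eq_l2_opNorm [Fintype α] [Fintype β] [DecidableEq β] (M : Matrix α β ℂ) :
    specNorm M = ‖M‖ :=
  rfl

lemma l2_opNorm_one_le [Fintype α] [DecidableEq α] : ‖(1 : Matrix α α 𝕜)‖ ≤ 1 := by
  rw [cstar_norm_def, map_one]
  exact ContinuousLinearMap.norm_id_le

lemma l2_opNorm_isometry_le_one [Fintype α] [Fintype β] [DecidableEq β] {W : Matrix α β 𝕜}
    (hW : Wᴴ * W = 1) : ‖W‖ ≤ 1 := by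
  have h : ‖W‖ * ‖W‖ ≤ 1 := by
    rw [← l2_opNorm_conjTranspose_mul_self, hW]
    exact l2_opNorm_one_le
  nlinarith [norm_nonneg W]

lemma l2_opNorm_isometry_mul [Fintype α] [Fintype β] [Fintype γ] [DecidableEq β] [DecidableEq γ]
    {W : Matrix α β 𝕜} (hW : Wᴴ * W = 1) (A : Matrix β γ 𝕜) : ‖W * A‖ = ‖A‖ := by
  have h : (W * A)ᴴ * (W * A) = Aᴴ * A := by
    rw [conjTranspose_mul, Matrix.mul_assoc, ← Matrix.mul_assoc Wᴴ, hW, Matrix.one_mul]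
  have h' := l2_opNorm_conjTranspose_mul_self (W * A)
  rw [h, l2_opNorm_conjTranspose_mul_self] at h'
  exact (mul_self_inj (norm_nonneg _) (norm_nonneg _)).mp h'.symm

lemma l2_opNorm_mul_isometry_le [Fintype α] [Fintype β] [Fintype γ] [DecidableEq α]
    [DecidableEq β] {W : Matrix α β 𝕜} (hW : Wᴴ * W = 1) (X : Matrix γ α 𝕜) : ‖X * W‖ ≤ ‖X‖ :=
  calc ‖X * W‖ ≤ ‖X‖ * ‖W‖ := l2_opNorm_mul X W
    _ ≤ ‖X‖ := mul_le_of_le_one_right (norm_nonneg X) (l2_opNorm_isometry_le_one hW)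

lemma l2_opNorm_mul_conjTranspose_isometry [Fintype α] [Fintype β] [Fintype γ]
    [DecidableEq α] [DecidableEq β] [DecidableEq γ]
    {W : Matrix α β 𝕜} (hW : Wᴴ * W = 1) (A : Matrix γ β 𝕜) : ‖A * Wᴴ‖ = ‖A‖ := by
  rw [← l2_opNorm_conjTranspose, conjTranspose_mul, conjTranspose_conjTranspose,
    l2_opNorm_isometry_mul hW, l2_opNorm_conjTranspose]

lemma l2_opNorm_le_of_isometry_mul_eq [Fintype α] [Fintype β] [Fintype γ] [Fintype δ]
    [DecidableEq α] [DecidableEq γ] [DecidableEq δ] {U : Matrix β α 𝕜} {V : Matrix δ γ 𝕜}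
    {A : Matrix α γ 𝕜} {D : Matrix β δ 𝕜} (hU : Uᴴ * U = 1) (hV : Vᴴ * V = 1)
    (h : U * A = D * V) : ‖A‖ ≤ ‖D‖ :=
  calc ‖A‖ = ‖U * A‖ := (l2_opNorm_isometry_mul hU A).symm
    _ = ‖D * V‖ := by rw [h]
    _ ≤ ‖D‖ := l2_opNorm_mul_isometry_le hV D

lemma conjTranspose_fromCols_mul_fromCols_eq_one [Fintype α] [DecidableEq β] [DecidableEq γ]
    {W : Matrix α β 𝕜} {W' : Matrix α γ 𝕜}
    (hW : Wᴴ * W = 1) (hW' : W'ᴴ * W' = 1) (h : Wᴴ * W' = 0) :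
    (fromCols W W')ᴴ * fromCols W W' = 1 := by
  have h' : W'ᴴ * W = 0 := by
    rw [← conjTranspose_conjTranspose W, ← conjTranspose_mul, h, conjTranspose_zero]
  rw [conjTranspose_fromCols_eq_fromRows_conjTranspose, fromRows_mul_fromCols, hW, hW', h, h',
    fromBlocks_one]

variable [Fintype α] [Fintype β] [Fintype γ] [Fintype δ] [DecidableEq γ] [DecidableEq δ]

lemma norm_toLp_fromBlocks_zero_zero_mulVec_le (A : Matrix α γ 𝕜) (B : Matrix β δ 𝕜)
    (u : γ → 𝕜) (v : δ → 𝕜) :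
    ‖(toLp 2 (fromBlocks A 0 0 B *ᵥ Sum.elim u v) : EuclideanSpace 𝕜 (α ⊕ β))‖ ≤
      max ‖A‖ ‖B‖ * ‖(toLp 2 (Sum.elim u v) : EuclideanSpace 𝕜 (γ ⊕ δ))‖ := by
  have hAu : ‖(toLp 2 (A *ᵥ u) : EuclideanSpace 𝕜 α)‖ ≤ ‖A‖ * ‖(toLp 2 u : EuclideanSpace 𝕜 γ)‖ :=
    l2_opNorm_mulVec A _
  have hBv : ‖(toLp 2 (B *ᵥ v) : EuclideanSpace 𝕜 β)‖ ≤ ‖B‖ * ‖(toLp 2 v : EuclideanSpace 𝕜 δ)‖ :=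
    l2_opNorm_mulVec B _
  have hA : ‖A‖ ≤ max ‖A‖ ‖B‖ := le_max_left _ _
  have hB : ‖B‖ ≤ max ‖A‖ ‖B‖ := le_max_right _ _
  rw [← pow_le_pow_iff_left₀ (norm_nonneg _) (by positivity) two_ne_zero, mul_pow,
    fromBlocks_mulVec]
  simp only [zero_mulVec, add_zero, zero_add, Sum.elim_comp_inl, Sum.elim_comp_inr,
    EuclideanSpace.norm_sq_toLp_sumElim]
  calc _ ≤ (‖A‖ * ‖(toLp 2 u : EuclideanSpace 𝕜 γ)‖) ^ 2
          + (‖B‖ * ‖(toLp 2 v : EuclideanSpace 𝕜 δ)‖) ^ 2 := by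
        gcongr
    _ ≤ _ := by rw [mul_add, mul_pow, mul_pow]; gcongr

lemma l2_opNorm_fromBlocks_zero_zero_le (A : Matrix α γ 𝕜) (B : Matrix β δ 𝕜) :
    ‖fromBlocks A 0 0 B‖ ≤ max ‖A‖ ‖B‖ := by
  rw [l2_opNorm_def]
  refine ContinuousLinearMap.opNorm_le_bound _ (by positivity) fun x => ?_
  have h := norm_toLp_fromBlocks_zero_zero_mulVec_le A B (x ∘ Sum.inl) (x ∘ Sum.inr)
  rwa [Sum.elim_comp_inl_inr, toLp_ofLp] at h

lemma l2_opNorm_fromBlocks_zero_zero [DecidableEq α] [DecidableEq β]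
    (A : Matrix α γ 𝕜) (B : Matrix β δ 𝕜) :
    ‖fromBlocks A 0 0 B‖ = max ‖A‖ ‖B‖ := by
  refine le_antisymm (l2_opNorm_fromBlocks_zero_zero_le A B) (max_le ?_ ?_)
  · refine l2_opNorm_le_of_isometry_mul_eq (U := fromRows 1 0) (V := fromRows 1 0) ?_ ?_ ?_ <;>
      simp [conjTranspose_fromRows_eq_fromCols_conjTranspose, fromCols_mul_fromRows,
        fromBlocks_mul_fromRows, fromRows_mul]
  · refine l2_opNorm_le_of_isometry_mul_eq (U := fromRows 0 1) (V := fromRows 0 1) ?_ ?_ ?_ <;>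
      simp [conjTranspose_fromRows_eq_fromCols_conjTranspose, fromCols_mul_fromRows,
        fromBlocks_mul_fromRows, fromRows_mul]

end Matrix

theorem sylvester_residual_spectral_norm_general {n m s : ℕ}
    (Um Vm : Matrix (Fin n) (Fin m × Fin s) ℂ)
    (U1 V1 : Matrix (Fin n) (Fin s) ℂ)
    (Y : Matrix (Fin m × Fin s) (Fin m × Fin s) ℂ)
    (H1 G1 : Matrix (Fin s) (Fin s) ℂ)
    (R : Matrix (Fin n) (Fin n) ℂ)
    (hUm : Umᴴ * Um = 1) (hVm : Vmᴴ * Vm = 1)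
    (hU1 : U1ᴴ * U1 = 1) (hV1 : V1ᴴ * V1 = 1)
    (hUorth : U1ᴴ * Um = 0) (hVorth : V1ᴴ * Vm = 0)
    (hR : R = U1 * H1 * (Em m s)ᴴ * Y * Vmᴴ + Um * Y * (Em m s) * G1ᴴ * V1ᴴ) :
    specNorm R = max (specNorm (H1 * (Em m s)ᴴ * Y)) (specNorm (Y * (Em m s) * G1ᴴ)) := by
  have hVmV1 : Vmᴴ * V1 = 0 := by
    rw [← conjTranspose_conjTranspose V1, ← conjTranspose_mul, hVorth, conjTranspose_zero]
  have hR' : R = fromCols U1 Um * fromBlocks (H1 * (Em m s)ᴴ * Y) 0 0 (Y * Em m s * G1ᴴ) *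
      (fromCols Vm V1)ᴴ := by
    rw [hR, conjTranspose_fromCols_eq_fromRows_conjTranspose, fromCols_mul_fromBlocks,
      fromCols_mul_fromRows]
    simp only [Matrix.mul_zero, add_zero, zero_add, Matrix.mul_assoc]
  simp only [specNorm_eq_l2_opNorm]
  rw [hR',
    l2_opNorm_mul_conjTranspose_isometry
      (conjTranspose_fromCols_mul_fromCols_eq_one hVm hV1 hVmV1),
    l2_opNorm_isometry_mul (conjTranspose_fromCols_mul_fromCols_eq_one hU1 hUm hUorth),
    l2_opNorm_fromBlocks_zero_zero]

/-- Cheap spectral-norm residual formula for the Galerkin approximation from block Arnoldi: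
`‖R‖₂ = max{‖H_{m+1,m} E_m* Y‖₂, ‖Y E_m G_{m+1,m}*‖₂}`. -/
theorem sylvester_residual_spectral_norm {n m s : ℕ} (hm : 0 < m)
    (Um Vm : Matrix (Fin n) (Fin m × Fin s) ℂ)
    (U1 V1 : Matrix (Fin n) (Fin s) ℂ)
    (Y : Matrix (Fin m × Fin s) (Fin m × Fin s) ℂ)
    (H1 G1 : Matrix (Fin s) (Fin s) ℂ)
    (R : Matrix (Fin n) (Fin n) ℂ)
    (hUm : Umᴴ * Um = 1) (hVm : Vmᴴ * Vm = 1)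
    (hU1 : U1ᴴ * U1 = 1) (hV1 : V1ᴴ * V1 = 1)
    (hUorth : U1ᴴ * Um = 0) (hVorth : V1ᴴ * Vm = 0)
    (hR : R = U1 * H1 * (Em m s)ᴴ * Y * Vmᴴ + Um * Y * (Em m s) * G1ᴴ * V1ᴴ) :
    specNorm R = max (specNorm (H1 * (Em m s)ᴴ * Y)) (specNorm (Y * (Em m s) * G1ᴴ)) :=
  sylvester_residual_spectral_norm_general Um Vm U1 V1 Y H1 G1 R hUm hVm hU1 hV1 hUorth hVorth hR
end

section
/- Suppose matrices Z⁽ʲ⁾, E_Z⁽ʲ⁾, R⁽ʲ⁾, E_R⁽ʲ⁾ (j = 0,…,k̄) satisfy A Z⁽⁰⁾ + Z⁽⁰⁾ B + C D* − E_R⁽⁻¹⁾ = R⁽⁰⁾ with E_R⁽⁻¹⁾ = 0, and A Z⁽ʲ⁾ + Z⁽ʲ⁾ B + R⁽ʲ⁻¹⁾ − E_R⁽ʲ⁻¹⁾ = R⁽ʲ⁾ for j = 1,…,k̄, where ‖E_Z⁽ʲ⁾‖ ≤ δ and ‖E_R⁽ʲ⁾‖ ≤ δ, and ‖R⁽ᵏ̄⁾‖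 ≤ ε. Then X⁽ᵏ̄⁾ = Σ_{j=0}^{k̄} (Z⁽ʲ⁾ − E_Z⁽ʲ⁾) satisfies ‖A X⁽ᵏ̄⁾ + X⁽ᵏ̄⁾ B + C D*‖ ≤ ε + (k̄+1)(‖A‖ + ‖B‖ + 1) δ. -/
open Matrix

/-- Residual bound for the restarted Sylvester solver with compression: if each compression
error is bounded by `δ` in a submultiplicative norm `N` and the final inner residual satisfies
`N(R⁽ᵏ⁾) ≤ ε`, then the residual of the returned approximation
`X = Σ_{j=0}^{k}(Z⁽ʲ⁾ − E_Z⁽ʲ⁾)` is bounded by `ε + (k+1)(N(A)+N(B)+1)δ`. -/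
theorem restarted_compressed_residual_bound {n s : ℕ}
    (A B : Matrix (Fin n) (Fin n) ℂ) (C D : Matrix (Fin n) (Fin s) ℂ)
    (N : Matrix (Fin n) (Fin n) ℂ → ℝ)
    (hnonneg : ∀ M, 0 ≤ N M)
    (htri : ∀ M₁ M₂, N (M₁ + M₂) ≤ N M₁ + N M₂)
    (hneg : ∀ M, N (-M) = N M)
    (hmulA : ∀ M, N (A * M) ≤ N A * N M)
    (hmulB : ∀ M, N (M * B) ≤ N M * N B)
    (k : ℕ) (δ ε : ℝ)
    (Z EZ R ER : ℕ → Matrix (Fin n) (Fin n) ℂ)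
    (h0 : A * Z 0 + Z 0 * B + C * Dᴴ = R 0)
    (hrec : ∀ j, 1 ≤ j → j ≤ k → A * Z j + Z j * B + R (j - 1) - ER (j - 1) = R j)
    (hEZ : ∀ j ≤ k, N (EZ j) ≤ δ)
    (hER : ∀ j ≤ k, N (ER j) ≤ δ)
    (hres : N (R k) ≤ ε) :
    N (A * (∑ j ∈ Finset.range (k + 1), (Z j - EZ j))
        + (∑ j ∈ Finset.range (k + 1), (Z j - EZ j)) * B + C * Dᴴ)
      ≤ ε + (k + 1) * (N A + N B + 1) * δ := by
  have hδ : 0 ≤ δ := le_trans (hnonneg (EZ 0)) (hEZ 0 (Nat.zero_le k))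
  have hNA : 0 ≤ N A := hnonneg A
  have hNB : 0 ≤ N B := hnonneg B
  set S : ℕ → Matrix (Fin n) (Fin n) ℂ :=
    fun m => ∑ j ∈ Finset.range (m + 1), (Z j - EZ j) with hS
  have hEZbd : ∀ j ≤ k, N (A * EZ j + EZ j * B) ≤ (N A + N B) * δ := by
    intro j hj
    calc N (A * EZ j + EZ j * B) ≤ N (A * EZ j) + N (EZ j * B) := htri _ _
      _ ≤ N A * N (EZ j) + N (EZ j) * N B := add_le_add (hmulA _) (hmulB _)
      _ ≤ N A * δ + δ * N B :=
        add_le_add (mul_le_mul_of_nonneg_left (hEZ j hj) hNA)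
          (mul_le_mul_of_nonneg_right (hEZ j hj) hNB)
      _ = (N A + N B) * δ := by ring
  have key : ∀ m ≤ k, N (A * S m + S m * B + C * Dᴴ - R m)
      ≤ (m : ℝ) * δ + ((m : ℝ) + 1) * (N A + N B) * δ := by
    intro m
    induction m with
    | zero =>
      intro _
      have h1 : A * S 0 + S 0 * B + C * Dᴴ - R 0 = -(A * EZ 0 + EZ 0 * B) := by
        have hS0 : S 0 = Z 0 - EZ 0 := by simp [hS]
        rw [hS0, ← h0]; noncomm_ring
      rw [h1, hneg]
      have := hEZbd 0 (Nat.zero_le k)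
      push_cast
      linarith
    | succ m ih =>
      intro hmk
      have hm : m ≤ k := Nat.le_of_succ_le hmk
      have hrec' := hrec (m + 1) (Nat.le_add_left 1 m) hmk
      rw [Nat.add_sub_cancel] at hrec'
      have hSs : S (m + 1) = S m + (Z (m + 1) - EZ (m + 1)) := Finset.sum_range_succ _ _
      have h1 : A * S (m + 1) + S (m + 1) * B + C * Dᴴ - R (m + 1)
          = ((A * S m + S m * B + C * Dᴴ - R m) + ER m) + -(A * EZ (m + 1) + EZ (m + 1) * B) := by
        rw [hSs, ← hrec']; noncomm_ring
      rw [h1]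
      have hb1 : N ((A * S m + S m * B + C * Dᴴ - R m) + ER m)
          ≤ ((m : ℝ) * δ + ((m : ℝ) + 1) * (N A + N B) * δ) + δ :=
        le_trans (htri _ _) (add_le_add (ih hm) (hER m hm))
      have hb2 := hEZbd (m + 1) hmk
      calc N (((A * S m + S m * B + C * Dᴴ - R m) + ER m) + -(A * EZ (m + 1) + EZ (m + 1) * B))
          ≤ N ((A * S m + S m * B + C * Dᴴ - R m) + ER m)
            + N (-(A * EZ (m + 1) + EZ (m + 1) * B)) := htri _ _
        _ ≤ (((m : ℝ) * δ + ((m : ℝ) + 1) * (N A + N B) * δ) + δ) + (N A + N B) * δ := by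
            rw [hneg]; exact add_le_add hb1 hb2
        _ ≤ (↑(m + 1) : ℝ) * δ + ((↑(m + 1) : ℝ) + 1) * (N A + N B) * δ := by
            push_cast; nlinarith [mul_nonneg (add_nonneg hNA hNB) hδ]
  have hfin := key k le_rfl
  have h2 : A * S k + S k * B + C * Dᴴ = (A * S k + S k * B + C * Dᴴ - R k) + R k := by
    abel
  show N (A * S k + S k * B + C * Dᴴ) ≤ ε + (k + 1) * (N A + N B + 1) * δ
  rw [h2]
  calc N ((A * S k + S k * B + C * Dᴴ - R k) + R k)
      ≤ N (A * S k + S k * B + C * Dᴴ - R k) + N (R k) := htri _ _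
    _ ≤ ((k : ℝ) * δ + ((k : ℝ) + 1) * (N A + N B) * δ) + ε := add_le_add hfin hres
    _ ≤ ε + (k + 1) * (N A + N B + 1) * δ := by nlinarith
end

section
/- Let A, B ∈ ℂ^{n×n} be normal matrices whose eigenvalues all have nonnegative real part, with min real parts Re(λ_{A,1}) and Re(λ_{B,1}) satisfying Re(λ_{A,1}) + Re(λ_{B,1}) > 0. If W satisfies A W + W B = S, then ‖W‖₂ ≤ ‖S‖₂ / (Re(λ_{A,1}) + Re(λ_{B,1})). -/
/-!
Choose a unit vector `v` at which `‖W v‖ = ‖W‖ =: σ` (finite dimension); then `W† W v = σ² v`.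
Pairing `S v = A (W v) + W (B v)` with `W v` gives
`Re ⟪S v, W v⟫ = Re ⟪A (W v), W v⟫ + σ² Re ⟪B v, v⟫ ≥ (a + b) σ²`, because for a normal `T`
the real part `ℜ T` has spectrum `Re '' spectrum T`, so `Re ⟪T x, x⟫ ≥ (min Re spectrum T) ‖x‖²`.
On the other hand `Re ⟪S v, W v⟫ ≤ ‖S‖ σ`.
-/

open Matrix

open scoped ComplexStarModule

theorem specNorm_eq_norm_toEuclideanCLM {n : Type*} [Fintype n] [DecidableEq n]
    (M : Matrix n n ℂ) : specNorm M = ‖toEuclideanCLM (𝕜 := ℂ) M‖ := rfl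

namespace ContinuousLinearMap

section ProperSpace

variable {𝕜 E F : Type*} [DenselyNormedField 𝕜] [NormedAddCommGroup E] [NormedSpace 𝕜 E]
  [ProperSpace E] [NormedAddCommGroup F] [NormedSpace 𝕜 F]

theorem exists_norm_eq_one_norm_apply_eq_opNorm {f : E →L[𝕜] F} (hf : f ≠ 0) :
    ∃ v, ‖v‖ = 1 ∧ ‖f v‖ = ‖f‖ := by
  obtain ⟨v, hv, hsup⟩ := (isCompact_closedBall (0 : E) 1).exists_sSup_image_eq
    (Metric.nonempty_closedBall.mpr zero_le_one) (continuous_norm.comp f.continuous).continuousOn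
  have hfv : ‖f v‖ = ‖f‖ := hsup.symm.trans (sSup_unitClosedBall_eq_norm f)
  refine ⟨v, le_antisymm (mem_closedBall_zero_iff.mp hv) ?_, hfv⟩
  have := f.le_opNorm v
  rw [hfv] at this
  exact (le_mul_iff_one_le_right (norm_pos_iff.mpr hf)).mp this

end ProperSpace

section Adjoint

variable {𝕜 E F : Type*} [RCLike 𝕜] [NormedAddCommGroup E] [InnerProductSpace 𝕜 E]
  [CompleteSpace E] [NormedAddCommGroup F] [InnerProductSpace 𝕜 F] [CompleteSpace F]

theorem adjoint_apply_apply_eq_of_norm_apply_eq_opNorm {f : E →L[𝕜] F} {v : E} (hv : ‖v‖ ≤ 1)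
    (hfv : ‖f v‖ = ‖f‖) : adjoint f (f v) = ((‖f‖ ^ 2 : ℝ) : 𝕜) • v := by
  set σ := ‖f‖
  have hinner : RCLike.re (inner 𝕜 (adjoint f (f v)) (((σ ^ 2 : ℝ) : 𝕜) • v)) = σ ^ 4 := by
    rw [inner_smul_right, adjoint_inner_left, inner_self_eq_norm_sq_to_K, hfv,
      ← RCLike.ofReal_pow, ← RCLike.ofReal_mul, RCLike.ofReal_re]
    ring
  have hnorm : ‖adjoint f (f v)‖ ≤ σ ^ 2 := by
    calc ‖adjoint f (f v)‖ ≤ ‖adjoint f‖ * ‖f v‖ := le_opNorm _ _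
      _ = σ ^ 2 := by rw [LinearIsometryEquiv.norm_map, hfv, sq]
  have hsmul : ‖((σ ^ 2 : ℝ) : 𝕜) • v‖ ≤ σ ^ 2 := by
    rw [norm_smul, RCLike.norm_ofReal, abs_of_nonneg (by positivity)]
    exact mul_le_of_le_one_right (by positivity) hv
  have hzero : ‖adjoint f (f v) - ((σ ^ 2 : ℝ) : 𝕜) • v‖ ^ 2 ≤ 0 := by
    rw [norm_sub_sq (𝕜 := 𝕜), hinner]
    nlinarith [norm_nonneg (adjoint f (f v)), norm_nonneg (((σ ^ 2 : ℝ) : 𝕜) • v)]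
  rw [← sub_eq_zero, ← norm_eq_zero, ← sq_eq_zero_iff]
  exact le_antisymm hzero (sq_nonneg _)

end Adjoint

variable {E : Type*} [NormedAddCommGroup E] [InnerProductSpace ℂ E]

theorem re_inner_realPart_apply [CompleteSpace E] (T : E →L[ℂ] E) (x : E) :
    (inner ℂ ((ℜ T : E →L[ℂ] E) x) x).re = (inner ℂ (T x) x).re := by
  rw [realPart_apply_coe, star_eq_adjoint, _root_.smul_apply, _root_.add_apply,
    inner_smul_left_eq_smul, inner_add_left, adjoint_inner_left, ← inner_conj_symm x (T x)]
  simp only [Complex.real_smul, Complex.re_ofReal_mul, Complex.add_re, Complex.conj_re]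
  ring

theorem mul_norm_sq_le_re_inner_of_le_re_spectrum [CompleteSpace E] {T : E →L[ℂ] E}
    [IsStarNormal T] {a : ℝ} (h : ∀ z ∈ spectrum ℂ T, a ≤ z.re) (x : E) :
    a * ‖x‖ ^ 2 ≤ (inner ℂ (T x) x).re := by
  have hle : algebraMap ℝ (E →L[ℂ] E) a ≤ ℜ T := by
    refine (algebraMap_le_iff_le_spectrum (ℜ T).2).mpr ?_
    rw [spectrum_realPart' T]
    rintro _ ⟨z, hz, rfl⟩
    exact h z hz
  have := ((le_def _ _).mp hle).re_inner_nonneg_left x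
  rw [_root_.sub_apply, inner_sub_left, map_sub, RCLike.re_to_complex,
    re_inner_realPart_apply] at this
  simpa [Algebra.algebraMap_eq_smul_one, inner_smul_left_eq_smul, inner_self_eq_norm_sq_to_K,
    ← Complex.ofReal_pow] using this

theorem add_mul_norm_le_norm_of_mul_add_mul_eq [ProperSpace E] {A B W S : E →L[ℂ] E}
    [IsStarNormal A] [IsStarNormal B] {a b : ℝ} (ha : ∀ z ∈ spectrum ℂ A, a ≤ z.re)
    (hb : ∀ z ∈ spectrum ℂ B, b ≤ z.re) (hW : A * W + W * B = S) :
    (a + b) * ‖W‖ ≤ ‖S‖ := by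
  rcases eq_or_ne W 0 with rfl | hW0
  · simp
  obtain ⟨v, hv, hWv⟩ := exists_norm_eq_one_norm_apply_eq_opNorm hW0
  set σ := ‖W‖
  have hσ : 0 < σ := norm_pos_iff.mpr hW0
  have hWWv := adjoint_apply_apply_eq_of_norm_apply_eq_opNorm hv.le hWv
  -- `W† (W v) = σ² v` moves `W` off the `B`-term
  have hSv : (inner ℂ (S v) (W v)).re
      = (inner ℂ (A (W v)) (W v)).re + σ ^ 2 * (inner ℂ (B v) v).re := by
    rw [← hW, _root_.add_apply, mul_apply_eq_comp, mul_apply_eq_comp, inner_add_left,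
      ← adjoint_inner_right W (B v), hWWv, inner_smul_right, Complex.add_re]
    exact congrArg _ (Complex.re_ofReal_mul _ _)
  have hlower : σ ^ 2 * (a + b) ≤ (inner ℂ (S v) (W v)).re := by
    have hA := mul_norm_sq_le_re_inner_of_le_re_spectrum ha (W v)
    have hB := mul_norm_sq_le_re_inner_of_le_re_spectrum hb v
    rw [hWv] at hA
    rw [hv, one_pow, mul_one] at hB
    rw [hSv]
    linarith [mul_le_mul_of_nonneg_left hB (sq_nonneg σ)]
  have hupper : (inner ℂ (S v) (W v)).re ≤ ‖S‖ * σ :=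
    calc (inner ℂ (S v) (W v)).re ≤ ‖S v‖ * ‖W v‖ :=
        (Complex.re_le_norm _).trans (norm_inner_le_norm _ _)
      _ ≤ ‖S‖ * σ := by rw [hWv]; gcongr; simpa [hv] using S.le_opNorm v
  nlinarith

end ContinuousLinearMap

theorem sylvester_operator_inverse_bound_general {n : ℕ}
    (A B W S : Matrix (Fin n) (Fin n) ℂ) (a b : ℝ)
    (hA : A * Aᴴ = Aᴴ * A) (hB : B * Bᴴ = Bᴴ * B)
    (ha : IsLeast (Complex.re '' spectrum ℂ A) a)
    (hb : IsLeast (Complex.re '' spectrum ℂ B) b)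
    (hab : 0 < a + b)
    (hW : A * W + W * B = S) :
    specNorm W ≤ specNorm S / (a + b) := by
  have : IsStarNormal A := ⟨hA.symm⟩
  have : IsStarNormal B := ⟨hB.symm⟩
  have hspec {M : Matrix (Fin n) (Fin n) ℂ} {c : ℝ}
      (h : IsLeast (Complex.re '' spectrum ℂ M) c) :
      ∀ z ∈ spectrum ℂ (toEuclideanCLM (𝕜 := ℂ) M), c ≤ z.re := fun z hz ↦
    h.2 ⟨z, by rwa [AlgEquiv.spectrum_eq] at hz, rfl⟩
  rw [specNorm_eq_norm_toEuclideanCLM, specNorm_eq_norm_toEuclideanCLM, le_div_iff₀ hab,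
    mul_comm]
  exact ContinuousLinearMap.add_mul_norm_le_norm_of_mul_add_mul_eq (hspec ha) (hspec hb)
    (by rw [← map_mul, ← map_mul, ← map_add, hW])

/-- Perturbation bound for the Sylvester operator with normal coefficients whose spectra lie
in the closed right half-plane: if `A W + W B = S` then
`‖W‖₂ ≤ ‖S‖₂ / (Re λ_{A,1} + Re λ_{B,1})`. -/
theorem sylvester_operator_inverse_bound {n : ℕ}
    (A B W S : Matrix (Fin n) (Fin n) ℂ) (a b : ℝ)
    (hA : A * Aᴴ = Aᴴ * A) (hB : B * Bᴴ = Bᴴ * B)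
    (ha : IsLeast (Complex.re '' spectrum ℂ A) a)
    (hb : IsLeast (Complex.re '' spectrum ℂ B) b)
    (ha0 : 0 ≤ a) (hb0 : 0 ≤ b) (hab : 0 < a + b)
    (hW : A * W + W * B = S) :
    specNorm W ≤ specNorm S / (a + b) :=
  sylvester_operator_inverse_bound_general A B W S a b hA hB ha hb hab hW
end

section
/- In the Lyapunov setting (B = A*, D = C), suppose the block Arnoldi relation A U_m = U_m H_m + U_{m+1} H_{m+1,m} E_m* holds with U_m* U_m = I and C in the range of U_m, and Y Hermitian solves H_m Y + Y H_m* + (U_m* C)(U_m* C)* = 0. Then the residual R = A(U_m Y U_m*) + (U_m Y U_m*) A* + C C* can be written as R = F J F*, where F = [U_{m+1} H_{m+1,m} | U_m Y E_m] and J = [[0, I_s],[I_s, 0]]; in particular R is Hermitian of rank at most 2s. -/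
open Matrix
open scoped ComplexOrder

/-!
Substituting the Arnoldi relation `A U = U H + V Eᴴ` and `C = U G` into the residual of
`X = U Y Uᴴ` splits it into `U (H Y + Y Hᴴ + G Gᴴ) Uᴴ`, which vanishes by the projected
Lyapunov equation, plus the rank-`2s` correction `V (U Y E)ᴴ + (U Y E) Vᴴ`. The latter is
`F J Fᴴ` for `F = [V | U Y E]`, since right multiplication by `J` swaps the two column blocks.
-/

namespace Matrix

variable {α : Type*} [Semiring α] [StarRing α]
variable {n s : Type*} [Fintype s]

theorem lyapunov_residual_eq_of_arnoldi [Fintype n] {k p : Type*} [Fintype k] [Fintype p]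
    {A : Matrix n n α} {U : Matrix n k α} {H Y : Matrix k k α} {V : Matrix n s α}
    {E : Matrix k s α} {G : Matrix k p α} (hArn : A * U = U * H + V * Eᴴ)
    (hY : H * Y + Y * Hᴴ + G * Gᴴ = 0) (hYh : Y.IsHermitian) :
    A * (U * Y * Uᴴ) + U * Y * Uᴴ * Aᴴ + U * G * (U * G)ᴴ
      = V * (U * Y * E)ᴴ + U * Y * E * Vᴴ := by
  have hArn' : Uᴴ * Aᴴ = Hᴴ * Uᴴ + E * Vᴴ := by
    simpa only [conjTranspose_mul, conjTranspose_add, conjTranspose_conjTranspose]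
      using congrArg conjTranspose hArn
  calc A * (U * Y * Uᴴ) + U * Y * Uᴴ * Aᴴ + U * G * (U * G)ᴴ
      = U * (H * Y + Y * Hᴴ + G * Gᴴ) * Uᴴ + (V * (U * Y * E)ᴴ + U * Y * E * Vᴴ) := by
        rw [show A * (U * Y * Uᴴ) = A * U * Y * Uᴴ by simp only [Matrix.mul_assoc],
          Matrix.mul_assoc (U * Y), hArn, hArn']
        simp only [conjTranspose_mul, hYh.eq, Matrix.mul_add, Matrix.add_mul, Matrix.mul_assoc]
        abel
    _ = V * (U * Y * E)ᴴ + U * Y * E * Vᴴ := by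
        rw [hY, Matrix.mul_zero, Matrix.zero_mul, zero_add]

theorem fromCols_mul_swap_mul_conjTranspose [DecidableEq s] (P Q : Matrix n s α) :
    fromCols P Q * (fromBlocks 0 1 1 0 : Matrix (s ⊕ s) (s ⊕ s) α) * (fromCols P Q)ᴴ
      = P * Qᴴ + Q * Pᴴ := by
  rw [fromCols_mul_fromBlocks, conjTranspose_fromCols_eq_fromRows_conjTranspose,
    fromCols_mul_fromRows]
  simp [add_comm]

end Matrix

theorem lyapunov_residual_ldlt_general {n m s : ℕ}
    (A : Matrix (Fin n) (Fin n) ℂ) (C : Matrix (Fin n) (Fin s) ℂ)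
    (Um : Matrix (Fin n) (Fin m × Fin s) ℂ) (U1 : Matrix (Fin n) (Fin s) ℂ)
    (Hm Y : Matrix (Fin m × Fin s) (Fin m × Fin s) ℂ)
    (H1 : Matrix (Fin s) (Fin s) ℂ)
    (R : Matrix (Fin n) (Fin n) ℂ)
    (hArn : A * Um = Um * Hm + U1 * H1 * (Em m s)ᴴ)
    (hC : C = Um * (Umᴴ * C))
    (hYh : Y.IsHermitian)
    (hY : Hm * Y + Y * Hmᴴ + (Umᴴ * C) * (Umᴴ * C)ᴴ = 0)
    (hR : R = A * (Um * Y * Umᴴ) + (Um * Y * Umᴴ) * Aᴴ + C * Cᴴ) :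
    R = (Matrix.fromCols (U1 * H1) (Um * Y * Em m s))
          * (Matrix.fromBlocks 0 1 1 0 : Matrix (Fin s ⊕ Fin s) (Fin s ⊕ Fin s) ℂ)
          * (Matrix.fromCols (U1 * H1) (Um * Y * Em m s))ᴴ
      ∧ R.IsHermitian ∧ R.rank ≤ 2 * s := by
  set F := Matrix.fromCols (U1 * H1) (Um * Y * Em m s)
  set J : Matrix (Fin s ⊕ Fin s) (Fin s ⊕ Fin s) ℂ := Matrix.fromBlocks 0 1 1 0
  have hRF : R = F * J * Fᴴ := by
    rw [fromCols_mul_swap_mul_conjTranspose, hR, hC,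
      lyapunov_residual_eq_of_arnoldi hArn hY hYh]
  have hJ : J.IsHermitian := IsHermitian.fromBlocks isHermitian_zero (by simp) isHermitian_zero
  refine ⟨hRF, hRF ▸ isHermitian_mul_mul_conjTranspose F hJ, ?_⟩
  calc R.rank = (F * J * Fᴴ).rank := by rw [hRF]
    _ ≤ F.rank := (rank_mul_le_left _ _).trans (rank_mul_le_left _ _)
    _ ≤ Fintype.card (Fin s ⊕ Fin s) := rank_le_card_width F
    _ = 2 * s := by simp [two_mul]

/-- In the Lyapunov setting, the Galerkin residual admits the symmetric indefinite
factorization `R = F J F*` with `F = [U_{m+1}H_{m+1,m} | U_m Y E_m]` and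
`J = [[0, I],[I, 0]]`; in particular `R` is Hermitian of rank at most `2s`. -/
theorem lyapunov_residual_ldlt {n m s : ℕ} (hm : 0 < m)
    (A : Matrix (Fin n) (Fin n) ℂ) (C : Matrix (Fin n) (Fin s) ℂ)
    (Um : Matrix (Fin n) (Fin m × Fin s) ℂ) (U1 : Matrix (Fin n) (Fin s) ℂ)
    (Hm Y : Matrix (Fin m × Fin s) (Fin m × Fin s) ℂ)
    (H1 : Matrix (Fin s) (Fin s) ℂ)
    (R : Matrix (Fin n) (Fin n) ℂ)
    (hUm : Umᴴ * Um = 1)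
    (hArn : A * Um = Um * Hm + U1 * H1 * (Em m s)ᴴ)
    (hHm : Hm = Umᴴ * A * Um)
    (hC : C = Um * (Umᴴ * C))
    (hYh : Y.IsHermitian)
    (hY : Hm * Y + Y * Hmᴴ + (Umᴴ * C) * (Umᴴ * C)ᴴ = 0)
    (hR : R = A * (Um * Y * Umᴴ) + (Um * Y * Umᴴ) * Aᴴ + C * Cᴴ) :
    R = (Matrix.fromCols (U1 * H1) (Um * Y * Em m s))
          * (Matrix.fromBlocks 0 1 1 0 : Matrix (Fin s ⊕ Fin s) (Fin s ⊕ Fin s) ℂ)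
          * (Matrix.fromCols (U1 * H1) (Um * Y * Em m s))ᴴ
      ∧ R.IsHermitian ∧ R.rank ≤ 2 * s :=
  lyapunov_residual_ldlt_general A C Um U1 Hm Y H1 R hArn hC hYh hY hR
end
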